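/- arXiv:1010.6217 — 6 statements merged into one kernel-verified Lean document; each statement's English description precedes it below -/
import Mathlib

section
/- There is an absolute constant C such that for every real E ≥ 1 one has ∑_{E < d ≤ 2E} ρ(d) ≤ C·E, where the sum is over integers d in (E, 2E] and ρ(d) denotes the number of residue classes m modulo d² such that d² divides m²+1. -/
/-! Hensel's lemma for the odd moduli that occur shows that `m ↦ m mod d` is injective on the
square roots of `-1` modulo `d²`, so `ρ(d)` is at most the number of square roots of `-1`
modulo `d`. By Thue's lemma each such root `m` comes from a representation `d = a² + b²` with
`a ≡ m b (mod d)`, and `(a, b)` determines `d` and `m`. Hence `∑_{d ≤ N} ρ(d)` is at most the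
number of lattice points in the square `|a|, |b| ≤ √N`, which is `O(N)`. -/

/-- `ρ(d) = #{m mod d² : d² ∣ m² + 1}`. -/
def rhoFn (d : ℕ) : ℕ :=
  ((Finset.range (d ^ 2)).filter (fun m => d ^ 2 ∣ m ^ 2 + 1)).card

open Finset

def sqrtsNegOne (n : ℕ) : Finset ℕ := {m ∈ range n | n ∣ m ^ 2 + 1}

lemma mem_sqrtsNegOne {n m : ℕ} : m ∈ sqrtsNegOne n ↔ m < n ∧ n ∣ m ^ 2 + 1 := by
  simp [sqrtsNegOne]

lemma rhoFn_eq_card_sqrtsNegOne (d : ℕ) : rhoFn d = #(sqrtsNegOne (d ^ 2)) := rfl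

namespace Int

lemma not_four_dvd_sq_add_one (m : ℤ) : ¬ 4 ∣ m ^ 2 + 1 := by
  have hZMod4 : ∀ x : ZMod 4, x ^ 2 + 1 ≠ 0 := by decide
  intro h
  exact hZMod4 m (by exact_mod_cast (ZMod.intCast_zmod_eq_zero_iff_dvd _ 4).2 h)

lemma odd_of_sq_dvd_sq_add_one {d m : ℤ} (h : d ^ 2 ∣ m ^ 2 + 1) : Odd d := by
  rw [← Int.not_even_iff_odd]
  rintro ⟨r, rfl⟩
  exact not_four_dvd_sq_add_one m (dvd_trans ⟨r ^ 2, by ring⟩ h)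

lemma isCoprime_of_dvd_sq_add_one {d m : ℤ} (h : d ∣ m ^ 2 + 1) : IsCoprime m d := by
  obtain ⟨q, hq⟩ := h
  exact ⟨-m, q, by linear_combination -hq⟩

lemma sq_dvd_sub_of_sq_dvd_sq_sub_sq {d x y : ℤ} (hd : Odd d) (hx : d ∣ x ^ 2 + 1)
    (hxy : d ∣ x - y) (h : d ^ 2 ∣ x ^ 2 - y ^ 2) : d ^ 2 ∣ x - y := by
  obtain ⟨t, ht⟩ := hxy
  have hcop : IsCoprime (x + y) d := by
    have h2x : IsCoprime (2 * x) d :=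
      (Int.isCoprime_two_left.2 hd).mul_left (isCoprime_of_dvd_sq_add_one hx)
    rw [show x + y = 2 * x + d * -t by linear_combination -ht]
    exact h2x.add_mul_left_left (-t)
  exact hcop.symm.pow_left.dvd_of_dvd_mul_right (by rwa [mul_comm, ← sq_sub_sq])

lemma dvd_sq_add_sq_of_dvd_sub_mul {d m a b : ℤ} (hm : d ∣ m ^ 2 + 1) (h : d ∣ a - m * b) :
    d ∣ a ^ 2 + b ^ 2 := by
  have := dvd_add (h.mul_right (a + m * b)) (hm.mul_left (b ^ 2))
  rwa [show (a - m * b) * (a + m * b) + b ^ 2 * (m ^ 2 + 1) = a ^ 2 + b ^ 2 by ring] at this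

lemma isCoprime_of_sq_add_sq_eq {d m a b : ℤ} (hm : d ∣ m ^ 2 + 1) (hab : a ^ 2 + b ^ 2 = d)
    (h : d ∣ a - m * b) : IsCoprime b d := by
  have hd : d ≠ 0 := by
    rintro rfl
    exact (zero_dvd_iff.1 hm).not_gt (by positivity)
  obtain ⟨q, hq⟩ := hm
  obtain ⟨s, hs⟩ := h
  -- `d = (m b + d s)² + b² = d (b² q + 2 m b s + d s²)`
  refine ⟨b * q + 2 * m * s, s ^ 2, mul_left_cancel₀ hd ?_⟩
  linear_combination (-(b ^ 2)) * hq - (d * s + a + m * b) * hs + hab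

lemma abs_le_sqrt_of_sq_le {a : ℤ} {N : ℕ} (h : a ^ 2 ≤ N) : |a| ≤ Nat.sqrt N := by
  rw [Int.abs_eq_natAbs, Nat.cast_le, Nat.le_sqrt']
  exact_mod_cast (Int.natAbs_sq a).symm ▸ h

end Int

lemma card_sqrtsNegOne_sq_le (d : ℕ) : #(sqrtsNegOne (d ^ 2)) ≤ #(sqrtsNegOne d) := by
  refine card_le_card_of_injOn (· % d) (fun m hm => ?_) (fun m₁ hm₁ m₂ hm₂ hmod => ?_)
  · obtain ⟨hm_lt, hm_dvd⟩ := mem_sqrtsNegOne.1 hm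
    have hd : 0 < d := Nat.pos_of_ne_zero (by rintro rfl; simp at hm_lt)
    have hmod : (m % d) ^ 2 + 1 ≡ m ^ 2 + 1 [MOD d] := ((Nat.mod_modEq m d).pow 2).add_right 1
    have hd_dvd : d ∣ m ^ 2 + 1 := dvd_trans (dvd_pow_self d two_ne_zero) hm_dvd
    exact mem_sqrtsNegOne.2 ⟨Nat.mod_lt m hd, (hmod.dvd_iff dvd_rfl).2 hd_dvd⟩
  · obtain ⟨hm₁_lt, hm₁_dvd⟩ := mem_sqrtsNegOne.1 hm₁
    obtain ⟨hm₂_lt, hm₂_dvd⟩ := mem_sqrtsNegOne.1 hm₂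
    have h₁ : (d : ℤ) ^ 2 ∣ (m₁ : ℤ) ^ 2 + 1 := by exact_mod_cast hm₁_dvd
    have h₂ : (d : ℤ) ^ 2 ∣ (m₂ : ℤ) ^ 2 + 1 := by exact_mod_cast hm₂_dvd
    have hsub : (d : ℤ) ∣ m₁ - m₂ := by
      simpa using (Nat.modEq_iff_dvd.1 (show m₂ ≡ m₁ [MOD d] from hmod.symm))
    have hlift : ((d ^ 2 : ℕ) : ℤ) ∣ m₁ - m₂ := by
      push_cast
      refine Int.sq_dvd_sub_of_sq_dvd_sq_sub_sq (Int.odd_of_sq_dvd_sq_add_one h₁)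
        (dvd_trans (dvd_pow_self _ two_ne_zero) h₁) hsub ?_
      simpa using dvd_sub h₁ h₂
    exact (Nat.modEq_iff_dvd.2 hlift).symm.eq_of_lt_of_lt hm₁_lt hm₂_lt

lemma exists_ne_zero_abs_le_dvd_sub_mul {n : ℕ} (hn : n ≠ 0) (m : ℤ) {k₁ k₂ : ℕ}
    (hk : n < (k₁ + 1) * (k₂ + 1)) :
    ∃ a b : ℤ, (a, b) ≠ 0 ∧ |a| ≤ k₁ ∧ |b| ≤ k₂ ∧ (n : ℤ) ∣ a - m * b := by
  have : NeZero n := ⟨hn⟩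
  obtain ⟨p, hp, q, hq, hpq, hfpq⟩ := exists_ne_map_eq_of_card_lt_of_maps_to
    (s := range (k₁ + 1) ×ˢ range (k₂ + 1)) (t := (univ : Finset (ZMod n)))
    (by simpa using hk) (f := fun p => (((p.1 : ℤ) - m * p.2 : ℤ) : ZMod n))
    (fun _ _ => mem_coe.2 (mem_univ _))
  simp only [mem_product, mem_range] at hp hq
  refine ⟨(p.1 : ℤ) - q.1, (p.2 : ℤ) - q.2, fun h => hpq ?_,
    abs_sub_le_iff.2 ⟨by omega, by omega⟩, abs_sub_le_iff.2 ⟨by omega, by omega⟩, ?_⟩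
  · simp only [Prod.ext_iff, Prod.fst_zero, Prod.snd_zero, sub_eq_zero, Nat.cast_inj] at h
    exact Prod.ext h.1 h.2
  · have := (ZMod.intCast_eq_intCast_iff_dvd_sub _ _ n).1 hfpq.symm
    rwa [show (p.1 : ℤ) - m * p.2 - (q.1 - m * q.2) = p.1 - q.1 - m * (p.2 - q.2) by ring] at this

/-- Thue's lemma; the box `√d × √(d - 1)` keeps `a² + b² < 2d` also when `d` is a square. -/
lemma exists_sq_add_sq_eq_of_dvd_sq_add_one {d : ℕ} (hd : d ≠ 0) {m : ℤ}
    (hm : (d : ℤ) ∣ m ^ 2 + 1) : ∃ a b : ℤ, a ^ 2 + b ^ 2 = d ∧ (d : ℤ) ∣ a - m * b := by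
  set k₁ := Nat.sqrt d
  set k₂ := Nat.sqrt (d - 1)
  have hk₁ : k₁ ^ 2 ≤ d := Nat.sqrt_le' d
  have hk₂ : k₂ ^ 2 ≤ d - 1 := Nat.sqrt_le' (d - 1)
  have hbox : d < (k₁ + 1) * (k₂ + 1) := by
    have h₁ : d < (k₁ + 1) ^ 2 := Nat.lt_succ_sqrt' d
    have h₂ : d ≤ (k₂ + 1) ^ 2 := by
      have : d - 1 < (k₂ + 1) ^ 2 := Nat.lt_succ_sqrt' (d - 1)
      omega
    refine lt_of_pow_lt_pow_left₀ 2 (Nat.zero_le _) ?_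
    calc d ^ 2 = d * d := sq d
      _ < (k₁ + 1) ^ 2 * (k₂ + 1) ^ 2 := Nat.mul_lt_mul_of_lt_of_le h₁ h₂ (by omega)
      _ = ((k₁ + 1) * (k₂ + 1)) ^ 2 := (mul_pow _ _ _).symm
  obtain ⟨a, b, hab, ha, hb, hdvd⟩ := exists_ne_zero_abs_le_dvd_sub_mul hd m hbox
  refine ⟨a, b, ?_, hdvd⟩
  have ha2 : a ^ 2 ≤ k₁ ^ 2 := sq_le_sq' (abs_le.1 ha).1 (abs_le.1 ha).2
  have hb2 : b ^ 2 ≤ k₂ ^ 2 := sq_le_sq' (abs_le.1 hb).1 (abs_le.1 hb).2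
  have hpos : 0 < a ^ 2 + b ^ 2 := by
    rcases eq_or_ne a 0 with rfl | ha0
    · have hb0 : b ≠ 0 := fun hb0 => hab (by simp [hb0])
      positivity
    · positivity
  have hlt : a ^ 2 + b ^ 2 < 2 * d := by
    have : ((k₁ ^ 2 : ℕ) : ℤ) + (k₂ ^ 2 : ℕ) < 2 * d := by omega
    push_cast at this
    linarith
  obtain ⟨u, hu⟩ := Int.dvd_sq_add_sq_of_dvd_sub_mul hm hdvd
  have hu1 : u = 1 := by nlinarith
  rw [hu, hu1, mul_one]

lemma eq_of_sq_add_sq_eq_of_dvd_sub_mul {d m₁ m₂ : ℕ} (h₁ : m₁ ∈ sqrtsNegOne d) (h₂ : m₂ < d)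
    {a b : ℤ} (hab : a ^ 2 + b ^ 2 = d) (hc₁ : (d : ℤ) ∣ a - m₁ * b) (hc₂ : (d : ℤ) ∣ a - m₂ * b) :
    m₁ = m₂ := by
  obtain ⟨hm₁_lt, hm₁_dvd⟩ := mem_sqrtsNegOne.1 h₁
  have hm₁ : (d : ℤ) ∣ (m₁ : ℤ) ^ 2 + 1 := by exact_mod_cast hm₁_dvd
  have hb := Int.isCoprime_of_sq_add_sq_eq hm₁ hab hc₁
  have hmul : (d : ℤ) ∣ ((m₂ : ℤ) - m₁) * b := by
    have := dvd_sub hc₁ hc₂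
    rwa [show a - m₁ * b - (a - m₂ * b) = ((m₂ : ℤ) - m₁) * b by ring] at this
  exact (Nat.modEq_iff_dvd.2 (hb.symm.dvd_of_dvd_mul_right hmul)).eq_of_lt_of_lt hm₁_lt h₂

lemma sum_card_sqrtsNegOne_le (N : ℕ) :
    ∑ d ∈ range (N + 1), #(sqrtsNegOne d) ≤ (2 * Nat.sqrt N + 1) ^ 2 := by
  set K := Nat.sqrt N
  have hIcc : #(Icc (-(K : ℤ)) K) = 2 * K + 1 := by rw [Int.card_Icc]; omega
  rw [← card_sigma, sq, ← hIcc, ← card_product]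
  refine card_le_card_of_forall_subsingleton
    (r := fun x p => p.1 ^ 2 + p.2 ^ 2 = (x.1 : ℤ) ∧ (x.1 : ℤ) ∣ p.1 - x.2 * p.2) ?_ ?_
  · rintro ⟨d, m⟩ hx
    obtain ⟨hd, hm⟩ : d ∈ range (N + 1) ∧ m ∈ sqrtsNegOne d := mem_sigma.1 hx
    obtain ⟨hm_lt, hm_dvd⟩ := mem_sqrtsNegOne.1 hm
    have hm_dvd' : (d : ℤ) ∣ (m : ℤ) ^ 2 + 1 := by exact_mod_cast hm_dvd
    obtain ⟨a, b, hab, hdvd⟩ := exists_sq_add_sq_eq_of_dvd_sq_add_one (by omega) hm_dvd'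
    have hdN : (d : ℤ) ≤ N := by have := mem_range.1 hd; omega
    refine ⟨(a, b), ?_, hab, hdvd⟩
    simp only [mem_product, mem_Icc, ← abs_le]
    exact ⟨Int.abs_le_sqrt_of_sq_le (by nlinarith), Int.abs_le_sqrt_of_sq_le (by nlinarith)⟩
  · rintro ⟨a, b⟩ - ⟨d₁, m₁⟩ ⟨hx₁, hab₁, hc₁⟩ ⟨d₂, m₂⟩ ⟨hx₂, hab₂, hc₂⟩
    obtain rfl : d₁ = d₂ := by exact_mod_cast hab₁.symm.trans hab₂
    obtain rfl : m₁ = m₂ :=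
      eq_of_sq_add_sq_eq_of_dvd_sub_mul (mem_sigma.1 hx₁).2
        (mem_sqrtsNegOne.1 (mem_sigma.1 hx₂).2).1 hab₁ hc₁ hc₂
    rfl

/-- `∑_{E < d ≤ 2E} ρ(d) ≪ E`. -/
theorem rhoFn_dyadic_sum_bound :
    ∃ C : ℝ, ∀ E : ℝ, 1 ≤ E →
      (∑ d ∈ Finset.Ioc ⌊E⌋₊ ⌊2 * E⌋₊, (rhoFn d : ℝ)) ≤ C * E := by
  refine ⟨18, fun E hE => ?_⟩
  set N := ⌊2 * E⌋₊
  have hN : 1 ≤ N := Nat.le_floor (by push_cast; linarith)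
  have hNE : (N : ℝ) ≤ 2 * E := Nat.floor_le (by linarith)
  have hK : 1 ≤ Nat.sqrt N := Nat.sqrt_pos.2 hN
  have hKN : Nat.sqrt N ^ 2 ≤ N := Nat.sqrt_le' N
  have hsum : ∑ d ∈ Ioc ⌊E⌋₊ N, rhoFn d ≤ 9 * N :=
    calc ∑ d ∈ Ioc ⌊E⌋₊ N, rhoFn d
        ≤ ∑ d ∈ Ioc ⌊E⌋₊ N, #(sqrtsNegOne d) := sum_le_sum fun d _ =>
          (rhoFn_eq_card_sqrtsNegOne d).trans_le (card_sqrtsNegOne_sq_le d)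
      _ ≤ ∑ d ∈ range (N + 1), #(sqrtsNegOne d) :=
          sum_le_sum_of_subset fun d hd => mem_range.2 (Nat.lt_succ_of_le (mem_Ioc.1 hd).2)
      _ ≤ (2 * Nat.sqrt N + 1) ^ 2 := sum_card_sqrtsNegOne_le N
      _ ≤ 9 * N := by nlinarith
  calc (∑ d ∈ Ioc ⌊E⌋₊ N, (rhoFn d : ℝ)) ≤ 9 * N := by exact_mod_cast hsum
    _ ≤ 18 * E := by linarith
end

section
/- There is an absolute constant C such that for every real D ≥ 1 one has ∑_{d > D} ρ(d)/d² ≤ C/D, where the sum is over integers d > D and ρ(d) denotes the number of residue classes m modulo d² such that d² divides m²+1. -/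
open Finset

theorem IsCoprime.sq_dvd_sub_of_dvd_sub {R : Type*} [CommRing R] {d m₁ m₂ : R}
    (hd : IsCoprime d 2) (h₁ : d ^ 2 ∣ m₁ ^ 2 + 1) (h₂ : d ^ 2 ∣ m₂ ^ 2 + 1) (h : d ∣ m₁ - m₂) :
    d ^ 2 ∣ m₁ - m₂ := by
  obtain ⟨c, hc⟩ := dvd_trans (dvd_pow_self d two_ne_zero) h₁
  obtain ⟨e, he⟩ := h
  have hm₁ : IsCoprime d m₁ := ⟨c, -m₁, by linear_combination -hc⟩
  have hcop : IsCoprime (d ^ 2) (m₁ + m₂) := by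
    have : IsCoprime d (2 * m₁ + (-e) * d) := (hd.mul_right hm₁).add_mul_right_right (-e)
    exact IsCoprime.pow_left (by convert this using 1; linear_combination -he)
  refine hcop.dvd_of_dvd_mul_right ?_
  have : (m₁ - m₂) * (m₁ + m₂) = (m₁ ^ 2 + 1) - (m₂ ^ 2 + 1) := by ring
  exact this ▸ dvd_sub h₁ h₂

theorem dvd_mul_add_of_dvd_mul_sub {R : Type*} [CommRing R] {d m u v : R}
    (hm : d ∣ m ^ 2 + 1) (h : d ∣ v * m - u) : d ∣ u * m + v := by
  have : u * m + v = v * (m ^ 2 + 1) - m * (v * m - u) := by ring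
  exact this ▸ dvd_sub (dvd_mul_of_dvd_right hm v) (dvd_mul_of_dvd_right h m)

theorem isCoprime_of_sq_add_sq_eq {R : Type*} [CommRing R] [IsDomain R] {d m u v : R}
    (hd : d ≠ 0) (huv : u ^ 2 + v ^ 2 = d) (hm : d ∣ m ^ 2 + 1) (h : d ∣ v * m - u) :
    IsCoprime v d := by
  obtain ⟨a, ha⟩ := h
  obtain ⟨b, hb⟩ := dvd_mul_add_of_dvd_mul_sub hm ⟨a, ha⟩
  -- `d * ((b - a * m) * v + a ^ 2 * d) = u ^ 2 + v ^ 2 = d`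
  refine ⟨b - a * m, a ^ 2, mul_left_cancel₀ hd ?_⟩
  linear_combination (-v) * hb + (m * v - (d * a + v * m - u)) * ha + huv

theorem exists_dvd_mul_sub_of_sq_le {d : ℕ} (hd : d ≠ 0) (m : ℤ) :
    ∃ x y : ℤ, (x, y) ≠ 0 ∧ x ^ 2 ≤ d ∧ y ^ 2 ≤ d ∧ (d : ℤ) ∣ y * m - x := by
  have : NeZero d := ⟨hd⟩
  set s := Nat.sqrt d
  have hcard : #(univ : Finset (ZMod d)) < #(range (s + 1) ×ˢ range (s + 1)) := by
    rw [card_univ, ZMod.card, card_product, card_range]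
    exact Nat.lt_succ_sqrt d
  obtain ⟨p, hp, q, hq, hne, heq⟩ := exists_ne_map_eq_of_card_lt_of_maps_to hcard
    (f := fun p : ℕ × ℕ => (p.1 : ZMod d) * m - p.2) (fun _ _ => mem_coe.2 (mem_univ _))
  simp only [mem_product, mem_range] at hp hq
  have hsq : ∀ a b : ℕ, a < s + 1 → b < s + 1 → ((a : ℤ) - b) ^ 2 ≤ d := by
    intro a b ha hb
    have hs : ((s * s : ℕ) : ℤ) ≤ d := by exact_mod_cast Nat.sqrt_le d
    push_cast at hs
    nlinarith [sq_le_sq' (by omega : -(s : ℤ) ≤ a - b) (by omega : (a : ℤ) - b ≤ s)]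
  refine ⟨p.2 - q.2, p.1 - q.1, fun h => hne ?_, hsq _ _ hp.2 hq.2, hsq _ _ hp.1 hq.1, ?_⟩
  · simp only [Prod.mk_eq_zero, sub_eq_zero, Nat.cast_inj] at h
    exact Prod.ext h.2 h.1
  · refine (ZMod.intCast_zmod_eq_zero_iff_dvd _ _).1 ?_
    push_cast
    linear_combination heq

theorem exists_sq_add_sq_eq_of_sq_add_sq_eq_two_mul {d m x y : ℤ} (hd : Odd d)
    (hm : d ∣ m ^ 2 + 1) (hxy : x ^ 2 + y ^ 2 = d * 2) (h : d ∣ y * m - x) :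
    ∃ u v : ℤ, u ^ 2 + v ^ 2 = d ∧ d ∣ v * m - u := by
  obtain ⟨v, hv⟩ : Even (x + y) :=
    (Int.even_pow' two_ne_zero).1 ⟨d + x * y, by linear_combination hxy⟩
  obtain rfl : x = v + v - y := by linear_combination hv
  refine ⟨v - y, v, mul_left_cancel₀ two_ne_zero (by linear_combination hxy), ?_⟩
  have h2 : d ∣ 2 * (v * m - (v - y)) := by
    have : 2 * (v * m - (v - y)) = (y * m - (v + v - y)) + ((v + v - y) * m + y) := by ring
    exact this ▸ dvd_add h (dvd_mul_add_of_dvd_mul_sub hm h)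
  exact (Int.isCoprime_two_right.2 hd).dvd_of_dvd_mul_left h2

theorem exists_sq_add_sq_eq_of_dvd {d : ℕ} (hd : Odd d) {m : ℤ} (hm : (d : ℤ) ∣ m ^ 2 + 1) :
    ∃ u v : ℤ, u ^ 2 + v ^ 2 = d ∧ (d : ℤ) ∣ v * m - u := by
  obtain ⟨x, y, hxy, hx, hy, h⟩ := exists_dvd_mul_sub_of_sq_le hd.pos.ne' m
  obtain ⟨c, hc⟩ : (d : ℤ) ∣ x ^ 2 + y ^ 2 := by
    have : x ^ 2 + y ^ 2 = y ^ 2 * (m ^ 2 + 1) - (y * m + x) * (y * m - x) := by ring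
    exact this ▸ dvd_sub (dvd_mul_of_dvd_right hm _) (dvd_mul_of_dvd_right h _)
  have hpos : 0 < x ^ 2 + y ^ 2 := by
    rcases not_and_or.1 (mt Prod.mk_eq_zero.2 hxy) with hx0 | hy0 <;> positivity
  have hd0 : (0 : ℤ) < d := by exact_mod_cast hd.pos
  obtain rfl | rfl : c = 1 ∨ c = 2 := by
    have : 0 < c := pos_of_mul_pos_right (hc ▸ hpos) hd0.le
    have : c ≤ 2 := le_of_mul_le_mul_left (by linarith) hd0
    omega
  · exact ⟨x, y, by rw [hc, mul_one], h⟩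
  · exact exists_sq_add_sq_eq_of_sq_add_sq_eq_two_mul (by exact_mod_cast hd) hm hc h

noncomputable def sumTwoSqReps (n : ℕ) : Finset (ℤ × ℤ) :=
  (Icc (-(n : ℤ)) n ×ˢ Icc (-(n : ℤ)) n).filter (fun p => p.1 ^ 2 + p.2 ^ 2 = n)

theorem rhoFn_eq_zero_of_even {d : ℕ} (hd : Even d) : rhoFn d = 0 := by
  refine card_eq_zero.2 (filter_eq_empty_iff.2 fun m _ hm => ?_)
  have h4 : 4 ∣ m ^ 2 + 1 := (pow_dvd_pow_of_dvd (even_iff_two_dvd.1 hd) 2).trans hm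
  have hsq : ∀ x : ZMod 4, x ^ 2 + 1 ≠ 0 := by decide
  exact hsq m (by exact_mod_cast (ZMod.natCast_eq_zero_iff _ 4).2 h4)

theorem rhoFn_le_card_sumTwoSqReps (d : ℕ) : rhoFn d ≤ #(sumTwoSqReps d) := by
  rcases Nat.even_or_odd d with hd | hd
  · exact (rhoFn_eq_zero_of_even hd).trans_le (Nat.zero_le _)
  refine card_le_card_of_forall_subsingleton
    (fun (m : ℕ) (p : ℤ × ℤ) => (d : ℤ) ∣ p.2 * m - p.1) ?_ ?_
  · intro m hm
    have hm' : (d : ℤ) ∣ (m : ℤ) ^ 2 + 1 := by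
      exact_mod_cast (dvd_pow_self d two_ne_zero).trans (mem_filter.1 hm).2
    obtain ⟨u, v, huv, h⟩ := exists_sq_add_sq_eq_of_dvd hd hm'
    have hd1 : (1 : ℤ) ≤ d := by exact_mod_cast hd.pos
    have hu := abs_le_of_sq_le_sq' (show u ^ 2 ≤ (d : ℤ) ^ 2 by nlinarith) (by positivity)
    have hv := abs_le_of_sq_le_sq' (show v ^ 2 ≤ (d : ℤ) ^ 2 by nlinarith) (by positivity)
    exact ⟨(u, v), by simp [sumTwoSqReps, huv, hu, hv], h⟩
  · rintro ⟨u, v⟩ hp m₁ hm₁ m₂ hm₂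
    simp only [sumTwoSqReps, mem_filter, mem_range, Set.mem_ofPred_eq] at hp hm₁ hm₂
    have hsq₁ : (d : ℤ) ^ 2 ∣ (m₁ : ℤ) ^ 2 + 1 := by exact_mod_cast hm₁.1.2
    have hsq₂ : (d : ℤ) ^ 2 ∣ (m₂ : ℤ) ^ 2 + 1 := by exact_mod_cast hm₂.1.2
    have hcop : IsCoprime v d := isCoprime_of_sq_add_sq_eq (by exact_mod_cast hd.pos.ne') hp.2
      ((dvd_pow_self _ two_ne_zero).trans hsq₁) hm₁.2
    have hdiff : (d : ℤ) ∣ m₁ - m₂ := by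
      refine hcop.symm.dvd_of_dvd_mul_left ?_
      have : v * ((m₁ : ℤ) - m₂) = (v * m₁ - u) - (v * m₂ - u) := by ring
      exact this ▸ dvd_sub hm₁.2 hm₂.2
    have := (Int.isCoprime_two_right.2 (by exact_mod_cast hd)).sq_dvd_sub_of_dvd_sub hsq₁ hsq₂ hdiff
    exact Nat.ModEq.eq_of_lt_of_lt ((Nat.modEq_iff_dvd).2 (by exact_mod_cast dvd_sub_comm.1 this))
      hm₁.1.1 hm₂.1.1

theorem sum_inv_pow_three_le {a : ℕ} (ha : a ≠ 0) {T : Finset ℕ} (hT : ∀ k ∈ T, a ≤ k) :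
    ∑ k ∈ T, ((k : ℝ) ^ 3)⁻¹ ≤ 2 / (a : ℝ) ^ 2 := by
  have ha' : (0 : ℝ) < a := by positivity
  calc ∑ k ∈ T, ((k : ℝ) ^ 3)⁻¹ ≤ ∑ k ∈ T, (a : ℝ)⁻¹ * ((k : ℝ) ^ 2)⁻¹ := by
        refine sum_le_sum fun k hk => ?_
        have hak : (a : ℝ) ≤ k := by exact_mod_cast hT k hk
        rw [← mul_inv]
        refine inv_anti₀ (mul_pos ha' (pow_pos (ha'.trans_le hak) 2)) ?_
        calc (a : ℝ) * (k : ℝ) ^ 2 ≤ (k : ℝ) * (k : ℝ) ^ 2 := by gcongr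
          _ = (k : ℝ) ^ 3 := by ring
    _ = (a : ℝ)⁻¹ * ∑ k ∈ T, ((k : ℝ) ^ 2)⁻¹ := (mul_sum _ _ _).symm
    _ ≤ (a : ℝ)⁻¹ * ∑ k ∈ Ioo (a - 1) (T.sup id + 1), ((k : ℝ) ^ 2)⁻¹ := by
        gcongr
        intro k hk
        have hak := hT k hk
        have hkT : k ≤ T.sup id := le_sup (f := id) hk
        rw [mem_Ioo]
        omega
    _ ≤ (a : ℝ)⁻¹ * (2 / ((a - 1 : ℕ) + 1)) := by gcongr; exact sum_Ioo_inv_sq_le _ _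
    _ = 2 / (a : ℝ) ^ 2 := by
        rw [Nat.cast_sub (Nat.one_le_iff_ne_zero.2 ha), Nat.cast_one, sub_add_cancel]
        field_simp

theorem sum_inv_pow_three_le_of_lt {D : ℝ} (hD : 0 < D) {T : Finset ℕ}
    (hT : ∀ k ∈ T, D < 2 * (k : ℝ) ^ 2) : ∑ k ∈ T, ((k : ℝ) ^ 3)⁻¹ ≤ 4 / D := by
  rcases T.eq_empty_or_nonempty with rfl | hne
  · rw [sum_empty]; positivity
  have ha := hT _ (min'_mem T hne)
  have ha0 : T.min' hne ≠ 0 := by rintro h; rw [h] at ha; norm_num at ha; linarith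
  calc ∑ k ∈ T, ((k : ℝ) ^ 3)⁻¹ ≤ 2 / (T.min' hne : ℝ) ^ 2 :=
        sum_inv_pow_three_le ha0 fun k hk => min'_le T k hk
    _ ≤ 4 / D := by
        rw [div_le_div_iff₀ (by positivity) hD]
        linarith

theorem sq_natAbs_max_le_sq_add_sq (x y : ℤ) :
    ((max x.natAbs y.natAbs : ℕ) : ℤ) ^ 2 ≤ x ^ 2 + y ^ 2 ∧
      x ^ 2 + y ^ 2 ≤ 2 * ((max x.natAbs y.natAbs : ℕ) : ℤ) ^ 2 := by
  rcases le_total x.natAbs y.natAbs with h | h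
  · have := Int.natAbs_le_iff_sq_le.1 h
    rw [max_eq_right h, Int.natCast_natAbs, sq_abs]
    constructor <;> nlinarith [sq_nonneg x]
  · have := Int.natAbs_le_iff_sq_le.1 h
    rw [max_eq_left h, Int.natCast_natAbs, sq_abs]
    constructor <;> nlinarith [sq_nonneg y]

theorem sum_filter_max_natAbs_eq_le (P : Finset (ℤ × ℤ)) {k : ℕ} (hk : k ≠ 0) :
    ∑ p ∈ P with max p.1.natAbs p.2.natAbs = k, (((p.1 ^ 2 + p.2 ^ 2 : ℤ) : ℝ) ^ 2)⁻¹ ≤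
      8 * ((k : ℝ) ^ 3)⁻¹ := by
  calc ∑ p ∈ P with max p.1.natAbs p.2.natAbs = k, (((p.1 ^ 2 + p.2 ^ 2 : ℤ) : ℝ) ^ 2)⁻¹
        ≤ #{p ∈ P | max p.1.natAbs p.2.natAbs = k} • ((k : ℝ) ^ 4)⁻¹ := by
          refine sum_le_card_nsmul _ _ _ fun p hp => ?_
          have hlo := (sq_natAbs_max_le_sq_add_sq p.1 p.2).1
          rw [(mem_filter.1 hp).2] at hlo
          have hlo' : (k : ℝ) ^ 2 ≤ ((p.1 ^ 2 + p.2 ^ 2 : ℤ) : ℝ) := by exact_mod_cast hlo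
          rw [show (k : ℝ) ^ 4 = ((k : ℝ) ^ 2) ^ 2 by ring]
          exact inv_anti₀ (by positivity) (by gcongr)
    _ ≤ (8 * k) • ((k : ℝ) ^ 4)⁻¹ := by
          gcongr
          rw [← Int.card_box hk]
          exact card_le_card fun p hp => Int.mem_box.2 (mem_filter.1 hp).2
    _ = 8 * ((k : ℝ) ^ 3)⁻¹ := by
          rw [nsmul_eq_mul]
          push_cast
          field_simp

theorem sum_inv_sq_sq_add_sq_le {D : ℝ} (hD : 0 < D) {P : Finset (ℤ × ℤ)}
    (hP : ∀ p ∈ P, D < ((p.1 ^ 2 + p.2 ^ 2 : ℤ) : ℝ)) :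
    ∑ p ∈ P, (((p.1 ^ 2 + p.2 ^ 2 : ℤ) : ℝ) ^ 2)⁻¹ ≤ 32 / D := by
  set nrm : ℤ × ℤ → ℕ := fun p => max p.1.natAbs p.2.natAbs
  have hT : ∀ k ∈ P.image nrm, D < 2 * (k : ℝ) ^ 2 := by
    simp only [mem_image, forall_exists_index, and_imp]
    rintro _ p hp rfl
    have hhi : ((p.1 ^ 2 + p.2 ^ 2 : ℤ) : ℝ) ≤ 2 * (nrm p : ℝ) ^ 2 := by
      exact_mod_cast (sq_natAbs_max_le_sq_add_sq p.1 p.2).2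
    exact (hP p hp).trans_le hhi
  have hT0 : ∀ k ∈ P.image nrm, k ≠ 0 := by
    rintro k hk rfl
    have := hT 0 hk
    norm_num at this
    linarith
  rw [← sum_fiberwise_of_maps_to (fun p hp => mem_image_of_mem nrm hp)]
  calc ∑ k ∈ P.image nrm, ∑ p ∈ P with nrm p = k, (((p.1 ^ 2 + p.2 ^ 2 : ℤ) : ℝ) ^ 2)⁻¹
        ≤ ∑ k ∈ P.image nrm, 8 * ((k : ℝ) ^ 3)⁻¹ :=
          sum_le_sum fun k hk => sum_filter_max_natAbs_eq_le P (hT0 k hk)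
    _ = 8 * ∑ k ∈ P.image nrm, ((k : ℝ) ^ 3)⁻¹ := (mul_sum _ _ _).symm
    _ ≤ 8 * (4 / D) := by gcongr; exact sum_inv_pow_three_le_of_lt hD hT
    _ = 32 / D := by ring

theorem sum_card_sumTwoSqReps_div_sq (s : Finset ℕ) :
    ∑ d ∈ s, (#(sumTwoSqReps d) : ℝ) / (d : ℝ) ^ 2 =
      ∑ p ∈ s.biUnion sumTwoSqReps, (((p.1 ^ 2 + p.2 ^ 2 : ℤ) : ℝ) ^ 2)⁻¹ := by
  have hdisj : (s : Set ℕ).PairwiseDisjoint sumTwoSqReps := fun d₁ _ d₂ _ hne =>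
    disjoint_left.2 fun p h₁ h₂ =>
      hne (by exact_mod_cast (mem_filter.1 h₁).2.symm.trans (mem_filter.1 h₂).2)
  rw [sum_biUnion hdisj]
  refine sum_congr rfl fun d _ => ?_
  rw [sum_congr rfl fun p hp => by rw [(mem_filter.1 hp).2], sum_const, nsmul_eq_mul,
    Int.cast_natCast, div_eq_mul_inv]

theorem sum_rhoFn_div_sq_le {D : ℝ} (hD : 0 < D) {s : Finset ℕ} (hs : ∀ d ∈ s, D < d) :
    ∑ d ∈ s, (rhoFn d : ℝ) / (d : ℝ) ^ 2 ≤ 32 / D :=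
  calc ∑ d ∈ s, (rhoFn d : ℝ) / (d : ℝ) ^ 2
      ≤ ∑ d ∈ s, (#(sumTwoSqReps d) : ℝ) / (d : ℝ) ^ 2 :=
        sum_le_sum fun d _ => by gcongr; exact_mod_cast rhoFn_le_card_sumTwoSqReps d
    _ = ∑ p ∈ s.biUnion sumTwoSqReps, (((p.1 ^ 2 + p.2 ^ 2 : ℤ) : ℝ) ^ 2)⁻¹ :=
        sum_card_sumTwoSqReps_div_sq s
    _ ≤ 32 / D := by
        refine sum_inv_sq_sq_add_sq_le hD fun p hp => ?_
        obtain ⟨d, hd, hp⟩ := mem_biUnion.1 hp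
        rw [(mem_filter.1 hp).2, Int.cast_natCast]
        exact hs d hd

/-- `∑_{d > D} ρ(d)/d² ≪ 1/D`. -/
theorem rhoFn_tail_sum_bound :
    Summable (fun d : ℕ => (rhoFn d : ℝ) / (d : ℝ) ^ 2) ∧
    ∃ C : ℝ, ∀ D : ℝ, 1 ≤ D →
      (∑' d : {d : ℕ // D < (d : ℝ)}, (rhoFn d : ℝ) / ((d : ℕ) : ℝ) ^ 2) ≤ C / D := by
  have hf : 0 ≤ fun d : ℕ => (rhoFn d : ℝ) / (d : ℝ) ^ 2 := fun d => by positivity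
  refine ⟨summable_of_sum_le (c := 32 / (1 / 2)) hf fun s => ?_, 32, fun D hD =>
    Real.tsum_le_of_sum_le (fun d => hf d) fun s => ?_⟩
  · rw [← sum_filter_of_ne (p := fun d => 0 < d) fun d _ h =>
      Nat.pos_of_ne_zero (by rintro rfl; simp at h)]
    exact sum_rhoFn_div_sq_le one_half_pos fun d hd => by
      have : (1 : ℝ) ≤ d := by exact_mod_cast (mem_filter.1 hd).2
      linarith
  · refine (sum_map s (Function.Embedding.subtype _) fun d => (rhoFn d : ℝ) / (d : ℝ) ^ 2)
      |>.symm.trans_le (sum_rhoFn_div_sq_le (by linarith) fun d hd => ?_)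
    obtain ⟨d, -, rfl⟩ := mem_map.1 hd
    exact d.2
end

section
/- The series ∑_{d=1}^∞ μ(d)·ρ(d)/d² converges absolutely and equals the Euler product ∏_p (1 − ρ(p)·p^{-2}) over all primes p, which in turn equals ∏_{p prime, p ≡ 1 (mod 4)} (1 − 2p^{-2}). Here μ is the Möbius function and ρ(d) denotes the number of residue classes m modulo d² such that d² divides m²+1. -/
/-!
By the Chinese remainder theorem `ρ` is multiplicative. For an odd prime `p`, `ZMod (p ^ 2)` is a
local ring in which `2` is invertible, so `x ^ 2 + 1 = 0` has either no root or exactly the two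
roots `±i`; a root exists iff `-1` is a square mod `p` (one Newton step lifts it), i.e. iff
`p ≡ 1 (mod 4)`. Hence `ρ(p) ^ 2 ≤ p`, so `ρ(d) ≤ √d` on squarefree `d` and the terms
`μ(d) ρ(d) / d ^ 2` are `O(d ^ (-3/2))`. The Euler product for this multiplicative function has
local factors `1 - ρ(p) / p ^ 2`, which equal `1` unless `p ≡ 1 (mod 4)`.
-/

open ArithmeticFunction

open Finset

section SqAddOne

variable {R S : Type*} [CommRing R] [CommRing S]

theorem natCard_sq_add_one_eq_zero_congr (e : R ≃+* S) :
    Nat.card {x : R // x ^ 2 + 1 = 0} = Nat.card {y : S // y ^ 2 + 1 = 0} :=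
  Nat.card_congr <| e.toEquiv.subtypeEquiv fun x => by
    rw [← map_eq_zero_iff e e.injective, map_add, map_pow, map_one]; rfl

theorem natCard_sq_add_one_eq_zero_prod :
    Nat.card {x : R × S // x ^ 2 + 1 = 0} =
      Nat.card {x : R // x ^ 2 + 1 = 0} * Nat.card {y : S // y ^ 2 + 1 = 0} := by
  rw [← Nat.card_prod]
  exact Nat.card_congr <|
    (Equiv.subtypeEquivRight fun x => by simp [Prod.ext_iff]).trans Equiv.subtypeProdEquivProd

/-- The witness is the Newton step `x - (x ^ 2 + 1) / (2 * x)`. -/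
theorem exists_sq_add_one_eq_zero_of_sq_add_one_sq_eq_zero (h2 : IsUnit (2 : R)) {x : R}
    (hx : (x ^ 2 + 1) ^ 2 = 0) : ∃ y : R, y ^ 2 + 1 = 0 := by
  have hx_unit : IsUnit x := by
    have h : IsUnit (1 - (x ^ 2 + 1)) := IsNilpotent.isUnit_one_sub ⟨2, hx⟩
    exact isUnit_of_mul_isUnit_left (x := x) (y := -x) (by convert h using 1; ring)
  obtain ⟨v, hv⟩ := (h2.mul hx_unit).exists_right_inv
  exact ⟨x - (x ^ 2 + 1) * v, by linear_combination (-(x ^ 2 + 1)) * hv + v ^ 2 * hx⟩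

theorem IsLocalRing.natCard_sq_add_one_eq_zero [IsLocalRing R] (h2 : IsUnit (2 : R)) {i : R}
    (hi : i ^ 2 + 1 = 0) : Nat.card {x : R // x ^ 2 + 1 = 0} = 2 := by
  have hroots : {x : R | x ^ 2 + 1 = 0} = {i, -i} := by
    ext x
    simp only [Set.mem_ofPred_eq, Set.mem_insert_iff, Set.mem_singleton_iff]
    refine ⟨fun hx => ?_, by rintro (rfl | rfl) <;> linear_combination hi⟩
    have hsum : IsUnit (x - i + (x + i)) := by
      have : IsUnit x := IsUnit.of_mul_eq_one (-x) (by linear_combination -hx)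
      convert h2.mul this using 1; ring
    have hprod : (x - i) * (x + i) = 0 := by linear_combination hx - hi
    rcases IsLocalRing.isUnit_or_isUnit_of_isUnit_add hsum with h | h
    · right; linear_combination h.mul_right_eq_zero.mp hprod
    · left; linear_combination h.mul_left_eq_zero.mp hprod
  have hne : i ≠ -i := fun h => by
    have hi0 : i = 0 := h2.mul_right_eq_zero.mp (by linear_combination h)
    simp [hi0] at hi
  calc Nat.card {x : R // x ^ 2 + 1 = 0} = ({i, -i} : Set R).ncard := by rw [← hroots]; rfl
    _ = 2 := Set.ncard_pair hne

end SqAddOne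

namespace ZMod

theorem isLocalRing_prime_pow {p n : ℕ} (hp : p.Prime) (hn : n ≠ 0) :
    IsLocalRing (ZMod (p ^ n)) := by
  have : Fact (1 < p ^ n) := ⟨Nat.one_lt_pow hn hp.one_lt⟩
  refine .of_isUnit_or_isUnit_one_sub_self fun a => or_iff_not_imp_left.mpr fun ha => ?_
  rw [← natCast_zmod_val a, isUnit_natCast_iff_not_dvd_pow hp (Nat.pos_of_ne_zero hn),
    not_not] at ha
  refine IsNilpotent.isUnit_one_sub ⟨n, ?_⟩
  rw [← natCast_zmod_val a, ← Nat.cast_pow, natCast_eq_zero_iff]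
  exact pow_dvd_pow_of_dvd ha n

theorem natCast_sq_add_one_eq_zero_iff {n m : ℕ} :
    (m : ZMod n) ^ 2 + 1 = 0 ↔ n ∣ m ^ 2 + 1 := by
  rw [← natCast_eq_zero_iff]
  push_cast
  rfl

theorem natCard_sq_add_one_eq_zero_eq_card_filter (n : ℕ) :
    Nat.card {x : ZMod n // x ^ 2 + 1 = 0} = #{m ∈ range n | n ∣ m ^ 2 + 1} := by
  rcases n.eq_zero_or_pos with rfl | hn
  · have : IsEmpty {x : ZMod 0 // x ^ 2 + 1 = 0} :=
      ⟨fun ⟨(x : ℤ), (hx : x ^ 2 + 1 = 0)⟩ => by nlinarith [sq_nonneg x]⟩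
    simp
  have : NeZero n := ⟨hn.ne'⟩
  rw [Nat.card_eq_fintype_card, Fintype.card_subtype]
  refine Finset.card_nbij' val (fun m => (m : ZMod n)) ?_ ?_ ?_ ?_
  · intro x hx
    simp only [coe_filter, mem_univ, true_and, Set.mem_ofPred_eq, mem_range] at hx ⊢
    exact ⟨val_lt x, by rwa [← natCast_sq_add_one_eq_zero_iff, natCast_zmod_val]⟩
  · intro m hm
    simp only [coe_filter, mem_range, Set.mem_ofPred_eq, mem_univ, true_and] at hm ⊢
    exact natCast_sq_add_one_eq_zero_iff.mpr hm.2
  · intro x _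
    exact natCast_zmod_val x
  · intro m hm
    simp only [coe_filter, mem_range, Set.mem_ofPred_eq] at hm
    exact val_cast_of_lt hm.1

theorem natCard_sq_add_one_eq_zero_prime_sq_of_mod_four_eq_one {p : ℕ} (hp : p.Prime)
    (hp1 : p % 4 = 1) : Nat.card {x : ZMod (p ^ 2) // x ^ 2 + 1 = 0} = 2 := by
  have : Fact p.Prime := ⟨hp⟩
  have : IsLocalRing (ZMod (p ^ 2)) := isLocalRing_prime_pow hp two_ne_zero
  have h2 : IsUnit (2 : ZMod (p ^ 2)) := by
    have h := (isUnit_natCast_iff_not_dvd_pow (a := 2) hp two_pos).mpr fun h => by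
      have := (Nat.prime_dvd_prime_iff_eq hp Nat.prime_two).mp h
      omega
    exact_mod_cast h
  obtain ⟨a, ha⟩ := exists_sq_eq_neg_one_iff.mpr (by omega : p % 4 ≠ 3)
  have hpa : p ∣ a.val ^ 2 + 1 := by
    rw [← natCast_sq_add_one_eq_zero_iff, natCast_zmod_val]
    linear_combination -ha
  have hx : ((a.val : ZMod (p ^ 2)) ^ 2 + 1) ^ 2 = 0 := by
    exact_mod_cast (natCast_eq_zero_iff _ _).mpr (pow_dvd_pow_of_dvd hpa 2)
  obtain ⟨i, hi⟩ := exists_sq_add_one_eq_zero_of_sq_add_one_sq_eq_zero h2 hx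
  exact IsLocalRing.natCard_sq_add_one_eq_zero h2 hi

theorem natCard_sq_add_one_eq_zero_prime_sq_of_mod_four_eq_three {p : ℕ} (hp : p.Prime)
    (hp3 : p % 4 = 3) : Nat.card {x : ZMod (p ^ 2) // x ^ 2 + 1 = 0} = 0 := by
  have : Fact p.Prime := ⟨hp⟩
  refine Nat.card_eq_zero.mpr (.inl ⟨fun ⟨x, hx⟩ => ?_⟩)
  have hx' := congrArg (castHom (dvd_pow_self p two_ne_zero) (ZMod p)) hx
  rw [map_add, map_pow, map_one, _root_.map_zero] at hx'
  exact exists_sq_eq_neg_one_iff.mp ⟨_, by linear_combination -hx'⟩ hp3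

end ZMod

theorem rhoFn_eq_natCard (d : ℕ) : rhoFn d = Nat.card {x : ZMod (d ^ 2) // x ^ 2 + 1 = 0} :=
  (ZMod.natCard_sq_add_one_eq_zero_eq_card_filter _).symm

theorem rhoFn_mul {m n : ℕ} (h : m.Coprime n) : rhoFn (m * n) = rhoFn m * rhoFn n := by
  rw [rhoFn_eq_natCard, rhoFn_eq_natCard, rhoFn_eq_natCard, mul_pow,
    natCard_sq_add_one_eq_zero_congr (ZMod.chineseRemainder (h.pow 2 2)),
    natCard_sq_add_one_eq_zero_prod]

theorem rhoFn_prime {p : ℕ} (hp : p.Prime) : rhoFn p = if p % 4 = 1 then 2 else 0 := by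
  rcases eq_or_ne p 2 with rfl | hp2
  · decide
  have hodd := hp.mod_two_eq_one_iff_ne_two.mpr hp2
  rw [rhoFn_eq_natCard]
  split_ifs with hp1
  · exact ZMod.natCard_sq_add_one_eq_zero_prime_sq_of_mod_four_eq_one hp hp1
  · exact ZMod.natCard_sq_add_one_eq_zero_prime_sq_of_mod_four_eq_three hp (by omega)

theorem rhoFn_prime_sq_le {p : ℕ} (hp : p.Prime) : rhoFn p ^ 2 ≤ p := by
  have := hp.two_le
  rw [rhoFn_prime hp]
  split_ifs <;> omega

theorem rhoFn_one : rhoFn 1 = 1 := by decide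

def rho : ArithmeticFunction ℕ := ⟨rhoFn, rfl⟩

@[simp]
theorem rho_apply (d : ℕ) : rho d = rhoFn d := rfl

theorem isMultiplicative_rho : rho.IsMultiplicative :=
  ⟨rhoFn_one, rhoFn_mul⟩

theorem rhoFn_sq_le_of_squarefree {d : ℕ} (hd : Squarefree d) : rhoFn d ^ 2 ≤ d :=
  calc rhoFn d ^ 2 = ∏ p ∈ d.primeFactors, rhoFn p ^ 2 := by
        rw [Finset.prod_pow]
        exact congrArg (· ^ 2) (isMultiplicative_rho.prod_primeFactors hd).symm
    _ ≤ ∏ p ∈ d.primeFactors, p :=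
        Finset.prod_le_prod' fun p hp => rhoFn_prime_sq_le (Nat.prime_of_mem_primeFactors hp)
    _ = d := Nat.prod_primeFactors_of_squarefree hd

noncomputable def moebiusRhoTerm : ArithmeticFunction ℝ :=
  ((moebius : ArithmeticFunction ℝ).pmul (rho : ArithmeticFunction ℝ)).pdiv
    ((pow 2 : ArithmeticFunction ℕ) : ArithmeticFunction ℝ)

theorem moebiusRhoTerm_apply (d : ℕ) :
    moebiusRhoTerm d = (moebius d : ℝ) * (rhoFn d : ℝ) / (d : ℝ) ^ 2 := by
  simp [moebiusRhoTerm, pdiv_apply, pmul_apply, pow_apply]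

theorem isMultiplicative_moebiusRhoTerm : moebiusRhoTerm.IsMultiplicative :=
  (isMultiplicative_moebius.intCast.pmul isMultiplicative_rho.natCast).pdiv
    isMultiplicative_pow.natCast

theorem abs_moebiusRhoTerm_le (d : ℕ) : |moebiusRhoTerm d| ≤ (d : ℝ) ^ (-(3 / 2) : ℝ) := by
  rw [moebiusRhoTerm_apply]
  by_cases hd : Squarefree d
  · have hd0 : (0 : ℝ) < d := by exact_mod_cast Nat.pos_of_ne_zero (Squarefree.ne_zero hd)
    have hμ : |(moebius d : ℝ)| = 1 := by exact_mod_cast abs_moebius_eq_one_of_squarefree hd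
    have hρ : (rhoFn d : ℝ) ≤ √d :=
      Real.le_sqrt_of_sq_le (by exact_mod_cast rhoFn_sq_le_of_squarefree hd)
    calc |(moebius d : ℝ) * rhoFn d / (d : ℝ) ^ 2| = rhoFn d / (d : ℝ) ^ 2 := by
          rw [abs_div, abs_mul, hμ, one_mul, abs_of_nonneg (by positivity),
            abs_of_nonneg (by positivity)]
      _ ≤ √d / (d : ℝ) ^ 2 := by gcongr
      _ = (d : ℝ) ^ (-(3 / 2) : ℝ) := by
          rw [Real.sqrt_eq_rpow, ← Real.rpow_natCast, ← Real.rpow_sub hd0]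
          norm_num
  · rw [moebius_eq_zero_of_not_squarefree hd]
    simp only [Int.cast_zero, zero_mul, zero_div, abs_zero]
    positivity

theorem summable_abs_moebiusRhoTerm : Summable fun d => |moebiusRhoTerm d| :=
  .of_nonneg_of_le (fun _ => abs_nonneg _) abs_moebiusRhoTerm_le
    (Real.summable_nat_rpow.mpr (by norm_num))

theorem tsum_moebiusRhoTerm_prime_pow {p : ℕ} (hp : p.Prime) :
    ∑' e, moebiusRhoTerm (p ^ e) = 1 - (rhoFn p : ℝ) / (p : ℝ) ^ 2 := by
  rw [tsum_eq_sum (s := Finset.range 2) fun e he => ?_]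
  · simp only [Finset.sum_range_succ, Finset.sum_range_zero, pow_zero, pow_one,
      moebiusRhoTerm_apply, moebius_apply_one, moebius_apply_prime hp, rhoFn_one]
    push_cast
    ring
  · have he : 1 < e := by simpa using he
    rw [moebiusRhoTerm_apply, moebius_apply_prime_pow hp (by omega), if_neg (by omega)]
    simp

theorem one_sub_rhoFn_div_sq {p : ℕ} (hp : p.Prime) :
    1 - (rhoFn p : ℝ) / (p : ℝ) ^ 2 = if p % 4 = 1 then 1 - 2 / (p : ℝ) ^ 2 else 1 := by
  rw [rhoFn_prime hp]
  split_ifs <;> simp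

theorem Nat.Primes.tprod_ite_eq_tprod_subtype {α : Type*} [CommMonoid α] [TopologicalSpace α]
    (P : ℕ → Prop) [DecidablePred P] (f : ℕ → α) :
    ∏' p : Nat.Primes, (if P p then f p else 1) = ∏' p : {p : ℕ // p.Prime ∧ P p}, f p := by
  have hinj : Function.Injective (α := {p : ℕ // p.Prime ∧ P p}) (β := Nat.Primes)
      fun q => ⟨q.1, q.2.1⟩ :=
    fun a b h => Subtype.ext (Subtype.mk.inj h)
  rw [← hinj.tprod_eq fun p hp => ⟨⟨p, p.2, of_not_not fun h => hp (if_neg h)⟩, rfl⟩]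
  exact tprod_congr fun q => if_pos q.2.2

/-- `∑_d μ(d) ρ(d)/d²` converges absolutely and equals the Euler product
`∏_p (1 − ρ(p) p⁻²) = ∏_{p ≡ 1 (mod 4)} (1 − 2 p⁻²)`. -/
theorem moebius_rhoFn_euler_product :
    Summable (fun d : ℕ => |(moebius d : ℝ) * (rhoFn d : ℝ) / (d : ℝ) ^ 2|) ∧
    Multipliable (fun p : Nat.Primes => (1 - (rhoFn p : ℝ) / ((p : ℕ) : ℝ) ^ 2)) ∧
    (∑' d : ℕ, (moebius d : ℝ) * (rhoFn d : ℝ) / (d : ℝ) ^ 2) =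
      (∏' p : Nat.Primes, (1 - (rhoFn p : ℝ) / ((p : ℕ) : ℝ) ^ 2)) ∧
    (∏' p : Nat.Primes, (1 - (rhoFn p : ℝ) / ((p : ℕ) : ℝ) ^ 2)) =
      (∏' p : {p : ℕ // p.Prime ∧ p % 4 = 1}, (1 - 2 / ((p : ℕ) : ℝ) ^ 2)) := by
  have hprod : HasProd (fun p : Nat.Primes => 1 - (rhoFn p : ℝ) / ((p : ℕ) : ℝ) ^ 2)
      (∑' d : ℕ, (moebius d : ℝ) * (rhoFn d : ℝ) / (d : ℝ) ^ 2) := by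
    have h := isMultiplicative_moebiusRhoTerm.eulerProduct_hasProd
      (by simpa only [Real.norm_eq_abs] using summable_abs_moebiusRhoTerm)
    simp only [fun p : Nat.Primes => tsum_moebiusRhoTerm_prime_pow p.2] at h
    simpa only [moebiusRhoTerm_apply] using h
  refine ⟨by simpa only [moebiusRhoTerm_apply] using summable_abs_moebiusRhoTerm,
    hprod.multipliable, hprod.tprod_eq.symm, ?_⟩
  exact (tprod_congr fun p => one_sub_rhoFn_div_sq p.2).trans
    (Nat.Primes.tprod_ite_eq_tprod_subtype (· % 4 = 1) fun p => 1 - 2 / (p : ℝ) ^ 2)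
end

section
/- Let e, f, n be positive integers with e²·f = n²+1. Then there exist integers x₁, x₂, y₁, y₂ such that e = x₁² + x₂², f = y₁² + y₂², and (x₁ + i·x₂)²·(y₁ + i·y₂) = n + i in the ring ℤ[i] of Gaussian integers; in particular, taking imaginary parts, 2·x₁·x₂·y₁ + (x₁² − x₂²)·y₂ = 1. -/
/-!
Put `z = n + i`. A common divisor of the primitive element `z` and its conjugate divides `2`,
and `e` is odd, so `A = gcd(z, e²)` is coprime to its conjugate. Hence `A * star A`, which
divides `e²`, equals `e²`: it is also divisible by `e²`, because `A` is a combination of `z`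
and `e²` and `e² ∣ z * star z`. In the Bézout domain `ℤ[i]`, a square `e²` written as a product
of coprime factors forces `A` to be associated to a square `α²`; then `N(α) = e`, `α² ∣ z`, and
the cofactor `β = z / α²` has norm `f`.
-/

open Zsqrtd

namespace GaussianInt

theorem dvd_two_of_dvd_of_dvd_star {z d : GaussianInt} (hz : IsCoprime z.re z.im) (hdz : d ∣ z)
    (hdz' : d ∣ star z) : d ∣ 2 := by
  obtain ⟨u, v, huv⟩ := hz
  have hsum : z + star z = 2 * z.re := by ext <;> simp; ring
  have hdiff : (z - star z) * ⟨0, -1⟩ = 2 * z.im := by ext <;> simp; ring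
  have hre : d ∣ 2 * z.re := hsum ▸ dvd_add hdz hdz'
  have him : d ∣ 2 * z.im := hdiff ▸ (dvd_sub hdz hdz').mul_right _
  have : (2 : GaussianInt) = u * (2 * z.re) + v * (2 * z.im) := by
    have huv' := congrArg (fun x : ℤ => (x : GaussianInt)) huv
    push_cast at huv'
    linear_combination (-2) * huv'
  exact this ▸ dvd_add (hre.mul_left _) (him.mul_left _)

theorem isCoprime_star_of_dvd {z a : GaussianInt} {c : ℤ} (hz : IsCoprime z.re z.im)
    (hc : IsCoprime 2 c) (haz : a ∣ z) (hac : a ∣ c) : IsCoprime a (star a) := by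
  refine IsRelPrime.isCoprime fun d hda hda' => ?_
  have hstar : star a ∣ star z := map_dvd (starRingEnd GaussianInt) haz
  have h2 : d ∣ 2 := dvd_two_of_dvd_of_dvd_star hz (hda.trans haz) (hda'.trans hstar)
  exact (hc.map (Int.castRingHom GaussianInt)).isUnit_of_dvd' (by simpa using h2) (hda.trans hac)

theorem dvd_gcd_mul_star {z : GaussianInt} {c : ℤ} (h : c ∣ z.norm) :
    (c : GaussianInt) ∣ EuclideanDomain.gcd z c * star (EuclideanDomain.gcd z c) := by
  obtain ⟨k, hk⟩ := h
  set s := EuclideanDomain.gcdA z c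
  set t := EuclideanDomain.gcdB z c
  have hzz : z * star z = c * k := by rw [← norm_eq_mul_conj, hk]; push_cast; rfl
  rw [EuclideanDomain.gcd_eq_gcd_ab, star_add, star_mul, star_mul, star_intCast]
  exact ⟨k * s * star s + z * s * star t + t * star z * star s + c * t * star t, by
    linear_combination (s * star s) * hzz⟩

theorem exists_sq_dvd_of_sq_dvd_norm {z : GaussianInt} {e : ℤ} (hz : IsCoprime z.re z.im)
    (he0 : 0 ≤ e) (he : IsCoprime 2 e) (h : e ^ 2 ∣ z.norm) :
    ∃ α : GaussianInt, α.norm = e ∧ α ^ 2 ∣ z := by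
  set A := EuclideanDomain.gcd z ((e ^ 2 : ℤ) : GaussianInt)
  have hAz : A ∣ z := EuclideanDomain.gcd_dvd_left _ _
  have hAe : A ∣ ((e ^ 2 : ℤ) : GaussianInt) := EuclideanDomain.gcd_dvd_right _ _
  have hAe' : star A ∣ ((e ^ 2 : ℤ) : GaussianInt) :=
    star_intCast (R := GaussianInt) (e ^ 2) ▸ map_dvd (starRingEnd GaussianInt) hAe
  have hcop : IsCoprime A (star A) := isCoprime_star_of_dvd hz he.pow_right hAz hAe
  have hAA : A * star A = ((A.norm : ℤ) : GaussianInt) := (norm_eq_mul_conj A).symm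
  have hnormA : A.norm = e ^ 2 := by
    refine Int.dvd_antisymm (norm_nonneg A) (sq_nonneg e) ?_ ?_
    · rw [← intCast_dvd_intCast, ← hAA]
      exact hcop.mul_dvd hAe hAe'
    · rw [← intCast_dvd_intCast, ← hAA]
      exact dvd_gcd_mul_star h
  obtain ⟨α, hα⟩ := exists_associated_pow_of_mul_eq_pow' hcop
    (show A * star A = (e : GaussianInt) ^ 2 by rw [hAA, hnormA]; push_cast; rfl)
  refine ⟨α, ?_, hα.dvd.trans hAz⟩
  have hsq : α.norm ^ 2 = e ^ 2 := by
    rw [sq, ← Zsqrtd.norm_mul, ← sq, norm_eq_of_associated (by norm_num) hα, hnormA]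
  exact (pow_left_inj₀ (norm_nonneg α) he0 two_ne_zero).mp hsq

end GaussianInt

theorem odd_of_sq_mul_eq_sq_add_one {e f n : ℕ} (h : e ^ 2 * f = n ^ 2 + 1) : Odd e := by
  refine Nat.not_even_iff_odd.mp fun ⟨k, hk⟩ => ?_
  subst hk
  have h4 : ((k + k) ^ 2 * f : ZMod 4) = n ^ 2 + 1 := by
    simpa using congrArg (Nat.cast : ℕ → ZMod 4) h
  have hmod4 : ∀ a b c : ZMod 4, (a + a) ^ 2 * b ≠ c ^ 2 + 1 := by decide
  exact hmod4 _ _ _ h4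

theorem gaussian_factorization_of_solution_general (e f n : ℕ)
    (he : 0 < e) (h : e ^ 2 * f = n ^ 2 + 1) :
    ∃ x₁ x₂ y₁ y₂ : ℤ,
      (e : ℤ) = x₁ ^ 2 + x₂ ^ 2 ∧
      (f : ℤ) = y₁ ^ 2 + y₂ ^ 2 ∧
      ((⟨x₁, x₂⟩ : GaussianInt) ^ 2 * ⟨y₁, y₂⟩ = ⟨(n : ℤ), 1⟩) ∧
      2 * x₁ * x₂ * y₁ + (x₁ ^ 2 - x₂ ^ 2) * y₂ = 1 := by
  set z : GaussianInt := ⟨n, 1⟩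
  have hz : z.norm = (e : ℤ) ^ 2 * f := by
    have hZ : (e : ℤ) ^ 2 * f = n ^ 2 + 1 := by exact_mod_cast h
    simp only [Zsqrtd.norm_def, z]
    linear_combination -hZ
  have he2 : IsCoprime 2 (e : ℤ) :=
    Nat.isCoprime_iff_coprime.mpr (Nat.coprime_two_left.mpr (odd_of_sq_mul_eq_sq_add_one h))
  obtain ⟨α, hα, β, hαβ⟩ := GaussianInt.exists_sq_dvd_of_sq_dvd_norm isCoprime_one_right
    (Int.natCast_nonneg e) he2 (Dvd.intro _ hz.symm)
  have hβ : β.norm = f := by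
    refine mul_left_cancel₀ (pow_ne_zero 2 (Int.natCast_pos.mpr he).ne') ?_
    rw [← hz, hαβ, Zsqrtd.norm_mul, sq α, Zsqrtd.norm_mul, hα, sq]
  refine ⟨α.re, α.im, β.re, β.im, ?_, ?_, hαβ.symm, ?_⟩
  · rw [← hα, Zsqrtd.norm_def]; ring
  · rw [← hβ, Zsqrtd.norm_def]; ring
  · have him := congrArg Zsqrtd.im hαβ
    simp only [z, sq, Zsqrtd.im_mul, Zsqrtd.re_mul] at him
    linear_combination -him

/-- Factorization in `ℤ[i]` of solutions of `e² f = n² + 1`. -/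
theorem gaussian_factorization_of_solution (e f n : ℕ)
    (he : 0 < e) (hf : 0 < f) (hn : 0 < n) (h : e ^ 2 * f = n ^ 2 + 1) :
    ∃ x₁ x₂ y₁ y₂ : ℤ,
      (e : ℤ) = x₁ ^ 2 + x₂ ^ 2 ∧
      (f : ℤ) = y₁ ^ 2 + y₂ ^ 2 ∧
      ((⟨x₁, x₂⟩ : GaussianInt) ^ 2 * ⟨y₁, y₂⟩ = ⟨(n : ℤ), 1⟩) ∧
      2 * x₁ * x₂ * y₁ + (x₁ ^ 2 - x₂ ^ 2) * y₂ = 1 :=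
  gaussian_factorization_of_solution_general e f n he h
end

section
/- There is an absolute constant C such that for every positive integer f and every real E ≥ 2, the number of pairs (e, n) of positive integers with E/2 < e ≤ E and e²·f = n²+1 is at most C·log E. -/
/-!
If `n₁ + e₁√f` and `n₂ + e₂√f` have norm `-1`, their quotient `a + c√f` has norm `+1`, with
`a = f e₁ e₂ - n₁ n₂` and `c = n₂ e₁ - n₁ e₂`. For `0 < e₁ < e₂` both `a` and `c` are positive,
so `a² = 1 + f c²` forces `a ≥ 2`, and `e₂ = a e₁ + c n₁ > 2 e₁`. Hence a dyadic range `(E/2, E]`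
contains at most one solution, which is far less than `2 log E`.
-/

namespace NegPell

variable {f e₁ n₁ e₂ n₂ : ℤ}

theorem coeff_pos (h₁ : e₁ ^ 2 * f = n₁ ^ 2 + 1) : 0 < f :=
  pos_of_mul_pos_right (h₁ ▸ by positivity) (sq_nonneg e₁)

theorem quot_re_sq_eq (h₁ : e₁ ^ 2 * f = n₁ ^ 2 + 1) (h₂ : e₂ ^ 2 * f = n₂ ^ 2 + 1) :
    (f * e₁ * e₂ - n₁ * n₂) ^ 2 = 1 + f * (n₂ * e₁ - n₁ * e₂) ^ 2 := by
  linear_combination (e₂ ^ 2 * f - n₂ ^ 2) * h₁ + h₂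

theorem e_eq_quot (h₁ : e₁ ^ 2 * f = n₁ ^ 2 + 1) :
    e₂ = (f * e₁ * e₂ - n₁ * n₂) * e₁ + (n₂ * e₁ - n₁ * e₂) * n₁ := by
  linear_combination -e₂ * h₁

theorem quot_im_pos (he₁ : 0 < e₁) (hn₁ : 0 < n₁) (hn₂ : 0 < n₂)
    (h₁ : e₁ ^ 2 * f = n₁ ^ 2 + 1) (h₂ : e₂ ^ 2 * f = n₂ ^ 2 + 1) (hlt : e₁ < e₂) :
    0 < n₂ * e₁ - n₁ * e₂ := by
  have key : (n₂ * e₁ - n₁ * e₂) * (n₂ * e₁ + n₁ * e₂) = e₂ ^ 2 - e₁ ^ 2 := by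
    linear_combination e₂ ^ 2 * h₁ - e₁ ^ 2 * h₂
  have he₂ : 0 < e₂ := he₁.trans hlt
  have hsum : 0 < n₂ * e₁ + n₁ * e₂ := by positivity
  exact pos_of_mul_pos_left (key ▸ by nlinarith) hsum.le

theorem quot_re_pos (he₁ : 0 < e₁) (he₂ : 0 < e₂)
    (h₁ : e₁ ^ 2 * f = n₁ ^ 2 + 1) (h₂ : e₂ ^ 2 * f = n₂ ^ 2 + 1) :
    0 < f * e₁ * e₂ - n₁ * n₂ := by
  have hf := coeff_pos h₁
  have key : (f * e₁ * e₂) ^ 2 = (n₁ * n₂) ^ 2 + (n₁ ^ 2 + n₂ ^ 2 + 1) := by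
    linear_combination (e₂ ^ 2 * f) * h₁ + (n₁ ^ 2 + 1) * h₂
  have : n₁ * n₂ < f * e₁ * e₂ :=
    lt_of_pow_lt_pow_left₀ 2 (by positivity) (by rw [key]; nlinarith)
  linarith

theorem two_mul_lt_of_lt (he₁ : 0 < e₁) (hn₁ : 0 < n₁) (hn₂ : 0 < n₂)
    (h₁ : e₁ ^ 2 * f = n₁ ^ 2 + 1) (h₂ : e₂ ^ 2 * f = n₂ ^ 2 + 1) (hlt : e₁ < e₂) :
    2 * e₁ < e₂ := by
  have hc := quot_im_pos he₁ hn₁ hn₂ h₁ h₂ hlt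
  have ha := quot_re_pos he₁ (he₁.trans hlt) h₁ h₂
  have hf := coeff_pos h₁
  have ha2 : 2 ≤ f * e₁ * e₂ - n₁ * n₂ := by nlinarith [quot_re_sq_eq h₁ h₂]
  rw [e_eq_quot (e₂ := e₂) (n₂ := n₂) h₁]
  nlinarith

theorem eq_of_lt_two_mul {f e₁ n₁ e₂ n₂ : ℕ} (he₁ : 0 < e₁) (hn₁ : 0 < n₁) (he₂ : 0 < e₂)
    (hn₂ : 0 < n₂) (h₁ : e₁ ^ 2 * f = n₁ ^ 2 + 1) (h₂ : e₂ ^ 2 * f = n₂ ^ 2 + 1)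
    (h₁₂ : e₂ < 2 * e₁) (h₂₁ : e₁ < 2 * e₂) : (e₁, n₁) = (e₂, n₂) := by
  rcases lt_trichotomy e₁ e₂ with hlt | rfl | hgt
  · zify at *
    linarith [two_mul_lt_of_lt he₁ hn₁ hn₂ h₁ h₂ hlt]
  · rw [Nat.pow_left_injective two_ne_zero (Nat.add_right_cancel (h₁.symm.trans h₂))]
  · zify at *
    linarith [two_mul_lt_of_lt he₂ hn₂ hn₁ h₂ h₁ hgt]

end NegPell

/-- Estermann's bound: for fixed `f`, there are `O(log E)` pairs `(e, n)` with
`E/2 < e ≤ E` and `e² f = n² + 1`. -/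
theorem estermann_dyadic_bound :
    ∃ C : ℝ, ∀ f : ℕ, 0 < f → ∀ E : ℝ, 2 ≤ E →
      (Nat.card {p : ℕ × ℕ | 0 < p.1 ∧ 0 < p.2 ∧
          E / 2 < (p.1 : ℝ) ∧ (p.1 : ℝ) ≤ E ∧
          p.1 ^ 2 * f = p.2 ^ 2 + 1} : ℝ) ≤ C * Real.log E := by
  refine ⟨2, fun f _ E hE => ?_⟩
  set S := {p : ℕ × ℕ | 0 < p.1 ∧ 0 < p.2 ∧ E / 2 < (p.1 : ℝ) ∧ (p.1 : ℝ) ≤ E ∧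
      p.1 ^ 2 * f = p.2 ^ 2 + 1}
  have hS : S.Subsingleton := by
    rintro ⟨e₁, n₁⟩ ⟨he₁, hn₁, hlo₁, hhi₁, h₁⟩ ⟨e₂, n₂⟩ ⟨he₂, hn₂, hlo₂, hhi₂, h₂⟩
    exact NegPell.eq_of_lt_two_mul he₁ hn₁ he₂ hn₂ h₁ h₂
      (by exact_mod_cast (by linarith : (e₂ : ℝ) < 2 * e₁))
      (by exact_mod_cast (by linarith : (e₁ : ℝ) < 2 * e₂))
  have hcard : (Nat.card S : ℝ) ≤ 1 := by
    have := hS.coe_sort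
    exact_mod_cast Finite.card_le_one_iff_subsingleton.mpr this
  have hlog : 1 / 2 < Real.log E :=
    (Real.log_two_gt_d9.trans_le' (by norm_num)).trans_le (Real.log_le_log two_pos hE)
  linarith
end

section
/- There is an absolute constant C such that for all reals E, F ≥ 2 one has M(E, F) ≤ C·F·log E, where M(E, F) = #{(e, f, n) ∈ ℕ³ : E/2 < e ≤ E, F/2 < f ≤ F, e²·f = n²+1} counts triples of positive integers. -/
/-- `M(E, F)`: the number of triples `(e, f, n)` of positive integers with
`E/2 < e ≤ E`, `F/2 < f ≤ F` and `e² f = n² + 1`. -/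
noncomputable def MEF (E F : ℝ) : ℕ :=
  Nat.card {t : ℕ × ℕ × ℕ | 0 < t.1 ∧ 0 < t.2.1 ∧ 0 < t.2.2 ∧
    E / 2 < (t.1 : ℝ) ∧ (t.1 : ℝ) ≤ E ∧
    F / 2 < (t.2.1 : ℝ) ∧ (t.2.1 : ℝ) ≤ F ∧
    t.1 ^ 2 * t.2.1 = t.2.2 ^ 2 + 1}

/-- If `e₁² f = n₁² + 1` and `e₂² f = n₂² + 1` with `e₁ < e₂`, then `e₂ ≥ 2 e₁`
(a gap property of solutions to the negative Pell equation). -/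
lemma pell_gap (f e₁ e₂ n₁ n₂ : ℤ) (hf : 2 ≤ f) (he₁ : 1 ≤ e₁) (he₂ : 1 ≤ e₂)
    (hn₁ : 0 ≤ n₁) (hn₂ : 0 ≤ n₂) (hlt : e₁ < e₂)
    (h₁ : e₁^2 * f = n₁^2 + 1) (h₂ : e₂^2 * f = n₂^2 + 1) : 2 * e₁ ≤ e₂ := by
  have hn₁e : e₁ ≤ n₁ := by nlinarith
  have hd : (n₂*e₁ - n₁*e₂) * (n₂*e₁ + n₁*e₂) = e₂^2 - e₁^2 := by
    linear_combination e₂^2 * h₁ - e₁^2 * h₂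
  have hs : 0 ≤ n₂*e₁ + n₁*e₂ := by positivity
  have hv : 0 < n₂ * e₁ - n₁ * e₂ := by
    nlinarith [hd, hs, mul_pos (lt_of_lt_of_le zero_lt_one he₁) (lt_of_lt_of_le zero_lt_one he₂)]
  have hd2 : (f*e₁*e₂ - n₁*n₂) * (f*e₁*e₂ + n₁*n₂) = f*e₁^2 + f*e₂^2 - 1 := by
    linear_combination (f*e₂^2 - 1) * h₁ + n₁^2 * h₂
  have hs2 : 0 ≤ f*e₁*e₂ + n₁*n₂ := by positivity
  have hu : 0 < f * e₁ * e₂ - n₁ * n₂ := by nlinarith [hd2, hs2]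
  have key : e₂ = (f*e₁*e₂ - n₁*n₂) * e₁ + (n₂*e₁ - n₁*e₂) * n₁ := by
    linear_combination (-e₂) * h₁
  nlinarith [key, hu, hv, hn₁e]

/-- `M(E, F) ≪ F log E`. -/
theorem MEF_bound :
    ∃ C : ℝ, ∀ E F : ℝ, 2 ≤ E → 2 ≤ F →
      (MEF E F : ℝ) ≤ C * F * Real.log E := by
  use 4
  intro E F hE hF
  have hE0 : (0:ℝ) < E := by linarith
  have hF0 : (0:ℝ) < F := by linarith
  -- at most one (e,n) per f
  have hcard : MEF E F ≤ Nat.floor F := by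
    rw [MEF]
    set S : Set (ℕ × ℕ × ℕ) := {t : ℕ × ℕ × ℕ | 0 < t.1 ∧ 0 < t.2.1 ∧ 0 < t.2.2 ∧
      E / 2 < (t.1 : ℝ) ∧ (t.1 : ℝ) ≤ E ∧
      F / 2 < (t.2.1 : ℝ) ∧ (t.2.1 : ℝ) ≤ F ∧
      t.1 ^ 2 * t.2.1 = t.2.2 ^ 2 + 1} with hS
    have hmaps : ∀ t ∈ S, t.2.1 ∈ Set.Ioc 0 (Nat.floor F) := by
      rintro ⟨e, f, n⟩ ⟨he, hf, hn, -, -, -, hfF, -⟩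
      exact ⟨hf, Nat.le_floor hfF⟩
    have hinj : Set.InjOn (fun t : ℕ × ℕ × ℕ => t.2.1) S := by
      rintro ⟨e₁, f₁, n₁⟩ ⟨he₁, hf₁, hn₁, he₁l, he₁u, hf₁l, hf₁u, heq₁⟩
        ⟨e₂, f₂, n₂⟩ ⟨he₂, hf₂, hn₂, he₂l, he₂u, hf₂l, hf₂u, heq₂⟩ hff
      simp only at hff
      subst hff
      have hf2 : 2 ≤ f₁ := by
        have h1 : (1:ℝ) < (f₁ : ℝ) := lt_of_le_of_lt (by linarith) hf₁l
        have h1' : 1 < f₁ := by exact_mod_cast h1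
        omega
      -- e₁ = e₂
      have hee : e₁ = e₂ := by
        by_contra hne
        rcases lt_or_gt_of_ne hne with h | h
        · have := pell_gap f₁ e₁ e₂ n₁ n₂ (by exact_mod_cast hf2)
            (by exact_mod_cast he₁) (by exact_mod_cast he₂)
            (by positivity) (by positivity) (by exact_mod_cast h)
            (by exact_mod_cast heq₁) (by exact_mod_cast heq₂)
          have h2e : (2:ℝ) * e₁ ≤ e₂ := by exact_mod_cast this
          linarith
        · have := pell_gap f₁ e₂ e₁ n₂ n₁ (by exact_mod_cast hf2)
            (by exact_mod_cast he₂) (by exact_mod_cast he₁)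
            (by positivity) (by positivity) (by exact_mod_cast h)
            (by exact_mod_cast heq₂) (by exact_mod_cast heq₁)
          have h2e : (2:ℝ) * e₂ ≤ e₁ := by exact_mod_cast this
          linarith
      subst hee
      have hnn : n₁ = n₂ := by
        have hp : n₁ ^ 2 = n₂ ^ 2 := by
          have h12 : n₁ ^ 2 + 1 = n₂ ^ 2 + 1 := heq₁.symm.trans heq₂
          omega
        exact Nat.pow_left_injective (by norm_num) hp
      subst hnn
      rfl
    calc Nat.card S = S.ncard := (Nat.card_coe_set_eq S).symm
      _ ≤ (Set.Ioc 0 (Nat.floor F)).ncard :=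
          Set.ncard_le_ncard_of_injOn _ hmaps hinj (Set.finite_Ioc _ _)
      _ ≤ Nat.floor F := by
          rw [← Finset.coe_Ioc, Set.ncard_coe_finset, Nat.card_Ioc]; omega
  have hlog : (1:ℝ)/2 ≤ Real.log E := by
    have := Real.log_two_gt_d9
    have h2 : Real.log 2 ≤ Real.log E := Real.log_le_log (by norm_num) hE
    linarith
  have h1 : (MEF E F : ℝ) ≤ F := by
    calc (MEF E F : ℝ) ≤ (Nat.floor F : ℝ) := by exact_mod_cast hcard
      _ ≤ F := Nat.floor_le hF0.le
  calc (MEF E F : ℝ) ≤ F := h1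
    _ ≤ 4 * F * Real.log E := by nlinarith
end
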